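/- arXiv:0906.1780 — 4 statements merged into one kernel-verified Lean document; each statement's English description precedes it below -/
import Mathlib

section
/- For any strictly increasing finite sequence p of positive integers, gcd(R(p)) = gcd(p), where R is the reduction operation. -/
/-- `OFS p`: `p` is a strictly increasing nonempty finite sequence of positive integers. -/
def OFS (p : List ℕ) : Prop := p ≠ [] ∧ p.Pairwise (· < ·) ∧ ∀ x ∈ p, 0 < x

/-- The reduction operation `R`. -/
def R : List ℕ → List ℕ
  | [] => []
  | [a] => [a]
  | a :: b :: rest => (((b :: rest).map (fun x => x - a)).insert a).mergeSort (· ≤ ·)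

/-- `max(p)` -/
def maxL (p : List ℕ) : ℕ := p.foldr max 0

/-- `gcd(p)` -/
def gcdL (p : List ℕ) : ℕ := p.foldr Nat.gcd 0

/-- Fuel-based auxiliary for `f`; `maxL p + 1` fuel always suffices since
`maxL` strictly decreases under `R` for lists of length `> 1`. -/
def faux : ℕ → List ℕ → ℕ
  | _, [] => 0
  | _, [a] => a
  | 0, _ => 0
  | fuel+1, p => p.headI + faux fuel (R p)

/-- The function `f` of Castelli–Mignosi–Restivo: `f p = p₁` if `|p| = 1`,
and `f p = p₁ + f (R p)` otherwise. -/
def f (p : List ℕ) : ℕ := faux (maxL p + 1) p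

/-- The function `fw` of Tijdeman–Zamboni. -/
def fw (p : List ℕ) : ℕ :=
  if h : 1 < p.length ∧ gcdL p.dropLast = gcdL p ∧ f p.dropLast ≤ maxL p
  then fw p.dropLast
  else f p
termination_by p.length
decreasing_by
  simp only [List.length_dropLast]
  omega

/-- The Fine–Wilf graph `G(p,k)` on vertex set `{1,…,k}` (represented by `Fin k`,
with `v : Fin k` standing for the integer `v+1`); `i` and `j` are adjacent iff
`|i - j|` is an entry of `p`. -/
def G (p : List ℕ) (k : ℕ) : SimpleGraph (Fin k) where
  Adj i j := i ≠ j ∧ (((j : ℕ) - (i : ℕ)) ∈ p ∨ ((i : ℕ) - (j : ℕ)) ∈ p)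
  symm := by
    constructor
    intro i j h
    exact ⟨h.1.symm, h.2.symm⟩
  loopless := by
    constructor
    intro i h
    exact h.1 rfl

/-- `p` is trim. -/
def Trim (p : List ℕ) : Prop :=
  p.length = 1 ∨ (1 < p.length ∧
    (gcdL p ≠ gcdL p.dropLast ∨ (gcdL p = gcdL p.dropLast ∧ maxL p < f p.dropLast)))

instance : LeftCommutative Nat.gcd := ⟨fun a b c => by
  rw [← Nat.gcd_assoc, Nat.gcd_comm a b, Nat.gcd_assoc]⟩

lemma gcdL_perm {l₁ l₂ : List ℕ} (h : l₁.Perm l₂) : gcdL l₁ = gcdL l₂ :=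
  h.foldr_eq 0

lemma gcdL_dvd {l : List ℕ} {a : ℕ} (h : a ∈ l) : gcdL l ∣ a := by
  induction l with
  | nil => simp at h
  | cons x l ih =>
    rcases List.mem_cons.1 h with rfl | h
    · exact Nat.gcd_dvd_left _ _
    · exact (Nat.gcd_dvd_right _ _).trans (ih h)

lemma gcdL_insert (a : ℕ) (l : List ℕ) : gcdL (l.insert a) = Nat.gcd a (gcdL l) := by
  by_cases h : a ∈ l
  · rw [List.insert_of_mem h, Nat.gcd_eq_right (gcdL_dvd h)]
  · rw [List.insert_of_not_mem h]; rfl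

lemma gcdL_map_sub (a : ℕ) (l : List ℕ) (h : ∀ x ∈ l, a ≤ x) :
    Nat.gcd a (gcdL (l.map (fun x => x - a))) = Nat.gcd a (gcdL l) := by
  induction l with
  | nil => rfl
  | cons x l ih =>
    have hx : a ≤ x := h x List.mem_cons_self
    have := ih (fun y hy => h y (List.mem_cons_of_mem _ hy))
    show Nat.gcd a (Nat.gcd (x - a) (gcdL (l.map _))) = Nat.gcd a (Nat.gcd x (gcdL l))
    rw [← Nat.gcd_assoc, Nat.gcd_sub_self_right hx, Nat.gcd_assoc,
      ← Nat.gcd_assoc, Nat.gcd_comm a x, Nat.gcd_assoc, this, ← Nat.gcd_assoc,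
      Nat.gcd_comm x a, Nat.gcd_assoc]

theorem gcd_R_eq (p : List ℕ) (hp : OFS p) : gcdL (R p) = gcdL p := by
  match p with
  | [] => exact absurd rfl hp.1
  | [a] => rfl
  | a :: b :: rest =>
    have hs := hp.2.1
    have hle : ∀ x ∈ b :: rest, a ≤ x := fun x hx =>
      le_of_lt ((List.pairwise_cons.1 hs).1 x hx)
    show gcdL (((((b :: rest).map (fun x => x - a)).insert a)).mergeSort (· ≤ ·)) = _
    rw [gcdL_perm (List.mergeSort_perm _ _), gcdL_insert, gcdL_map_sub a _ hle]
    rfl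
end

section
/- For any p ∈ OFS, f(p) ≥ max(p); moreover, if |p| > 1, then f(p) ≥ 2·p_1. -/
def Good (p : List ℕ) : Prop := p.Pairwise (· < ·) ∧ ∀ x ∈ p, 0 < x

lemma mem_le_maxL {x : ℕ} {p : List ℕ} (h : x ∈ p) : x ≤ maxL p := by
  induction p with
  | nil => cases h
  | cons a t ih =>
    rcases List.mem_cons.1 h with rfl | h
    · exact le_max_left _ _
    · exact le_trans (ih h) (le_max_right _ _)

lemma maxL_mem {p : List ℕ} (h : p ≠ []) : maxL p ∈ p := by
  induction p with
  | nil => exact absurd rfl h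
  | cons a t ih =>
    rcases eq_or_ne t [] with rfl | ht
    · simp [maxL]
    · have hmt : maxL (a :: t) = max a (maxL t) := rfl
      by_cases hc : maxL t ≤ a
      · rw [hmt, max_eq_left hc]; simp
      · rw [hmt, max_eq_right (le_of_not_ge hc)]
        exact List.mem_cons_of_mem _ (ih ht)

lemma one_le_maxL {p : List ℕ} (hg : Good p) (hne : p ≠ []) : 1 ≤ maxL p :=
  le_trans (hg.2 _ (maxL_mem hne)) le_rfl

lemma faux_nil (m : ℕ) : faux m [] = 0 := by cases m <;> rfl
lemma faux_single (m a : ℕ) : faux m [a] = a := by cases m <;> rfl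
lemma faux_cons (m a b : ℕ) (rest : List ℕ) :
    faux (m+1) (a :: b :: rest) = a + faux m (R (a :: b :: rest)) := rfl

lemma mem_R {x a b : ℕ} {rest : List ℕ} (h : x ∈ R (a :: b :: rest)) :
    x = a ∨ ∃ y ∈ b :: rest, x = y - a := by
  rw [R] at h
  have := (List.mergeSort_perm (((b :: rest).map (fun x => x - a)).insert a) _).mem_iff.1 h
  rcases List.mem_insert_iff.1 this with rfl | h2
  · exact Or.inl rfl
  · obtain ⟨y, hy, rfl⟩ := List.mem_map.1 h2
    exact Or.inr ⟨y, hy, rfl⟩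

lemma mem_R' {x a b : ℕ} {rest : List ℕ}
    (h : x = a ∨ ∃ y ∈ b :: rest, x = y - a) : x ∈ R (a :: b :: rest) := by
  rw [R]
  refine (List.mergeSort_perm _ _).mem_iff.2 (List.mem_insert_iff.2 ?_)
  rcases h with rfl | ⟨y, hy, rfl⟩
  · exact Or.inl rfl
  · exact Or.inr (List.mem_map.2 ⟨y, hy, rfl⟩)

lemma good_tail_gt {a b : ℕ} {rest : List ℕ} (hg : Good (a :: b :: rest)) :
    ∀ y ∈ b :: rest, a < y := by
  intro y hy
  exact (List.pairwise_cons.1 hg.1).1 y hy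

lemma maxL_cons_lt {a b : ℕ} {rest : List ℕ} (hg : Good (a :: b :: rest)) :
    a < maxL (a :: b :: rest) := by
  have hb : b ≤ maxL (a :: b :: rest) := mem_le_maxL (by simp)
  have := good_tail_gt hg b (by simp)
  omega

lemma maxL_mem_tail {a b : ℕ} {rest : List ℕ} (hg : Good (a :: b :: rest)) :
    maxL (a :: b :: rest) ∈ b :: rest := by
  have hm := maxL_mem (p := a :: b :: rest) (by simp)
  rcases List.mem_cons.1 hm with he | h
  · exact absurd he.symm (Nat.ne_of_lt (maxL_cons_lt hg))
  · exact h

lemma good_R {a b : ℕ} {rest : List ℕ} (hg : Good (a :: b :: rest)) :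
    Good (R (a :: b :: rest)) := by
  constructor
  · -- sorted
    have hs : (R (a :: b :: rest)).Pairwise (· ≤ ·) := by
      rw [R]; exact List.pairwise_mergeSort' (r := fun x y : ℕ => x ≤ y) _
    have hnd : (R (a :: b :: rest)).Nodup := by
      rw [R]
      refine (List.mergeSort_perm _ _).nodup_iff.2 ?_
      refine List.Nodup.insert ?_
      refine List.Nodup.map_on ?_ ?_
      · intro x hx y hy hxy
        have hx' := good_tail_gt hg x hx
        have hy' := good_tail_gt hg y hy
        omega
      · have : (b :: rest).Pairwise (· < ·) := (List.pairwise_cons.1 hg.1).2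
        exact this.nodup
    exact (List.SortedLE.sortedLT_of_nodup hs.sortedLE hnd).pairwise
  · intro x hx
    rcases mem_R hx with he | ⟨y, hy, rfl⟩
    · rw [he]; exact hg.2 a (by simp)
    · have := good_tail_gt hg y hy
      omega

lemma maxL_R_lt {a b : ℕ} {rest : List ℕ} (hg : Good (a :: b :: rest)) :
    maxL (R (a :: b :: rest)) < maxL (a :: b :: rest) := by
  have hne : R (a :: b :: rest) ≠ [] := by
    intro h
    have : a ∈ R (a :: b :: rest) := mem_R' (Or.inl rfl)
    simp [h] at this
  have hm := maxL_mem hne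
  rcases mem_R hm with he | ⟨y, hy, he⟩
  · rw [he]; exact maxL_cons_lt hg
  · have h1 : y ≤ maxL (a :: b :: rest) := mem_le_maxL (List.mem_cons_of_mem _ hy)
    have h2 : 0 < a := hg.2 a (by simp)
    have h3 : 1 ≤ maxL (a :: b :: rest) := one_le_maxL hg (by simp)
    omega

lemma faux_eq_faux : ∀ N m n (p : List ℕ), maxL p < m → maxL p < n → Good p →
    maxL p ≤ N → faux m p = faux n p := by
  intro N
  induction N with
  | zero =>
    intro m n p hm hn hg hN
    rcases p with _ | ⟨a, t⟩
    · rw [faux_nil, faux_nil]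
    · have := one_le_maxL hg (by simp)
      omega
  | succ N ih =>
    intro m n p hm hn hg hN
    rcases p with _ | ⟨a, _ | ⟨b, rest⟩⟩
    · rw [faux_nil, faux_nil]
    · rw [faux_single, faux_single]
    · have := one_le_maxL hg (by simp)
      rcases m with _ | m
      · omega
      rcases n with _ | n
      · omega
      rw [faux_cons, faux_cons]
      have hlt := maxL_R_lt hg
      rw [ih m n _ (by omega) (by omega) (good_R hg) (by omega)]

lemma f_cons {a b : ℕ} {rest : List ℕ} (hg : Good (a :: b :: rest)) :
    f (a :: b :: rest) = a + f (R (a :: b :: rest)) := by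
  have hlt := maxL_R_lt hg
  show faux (maxL (a :: b :: rest) + 1) (a :: b :: rest) = _
  rw [faux_cons,
    faux_eq_faux (maxL (R (a :: b :: rest))) _ (maxL (R (a :: b :: rest)) + 1) _
      (by omega) (by omega) (good_R hg) le_rfl]
  rfl

lemma main_aux : ∀ N (p : List ℕ), maxL p ≤ N → Good p → p ≠ [] →
    maxL p ≤ f p ∧ (1 < p.length → 2 * p.headI ≤ f p) := by
  intro N
  induction N with
  | zero =>
    intro p hN hg hne
    have := one_le_maxL hg hne
    omega
  | succ N ih =>
    intro p hN hg hne
    rcases p with _ | ⟨a, _ | ⟨b, rest⟩⟩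
    · exact absurd rfl hne
    · refine ⟨?_, by simp⟩
      show maxL [a] ≤ f [a]
      have : f [a] = a := by unfold f; rw [faux_single]
      rw [this]
      simp [maxL]
    ·
      have hlt := maxL_R_lt hg
      have hRne : R (a :: b :: rest) ≠ [] := by
        intro h
        have : a ∈ R (a :: b :: rest) := mem_R' (Or.inl rfl)
        simp [h] at this
      have hIH := ih (R (a :: b :: rest)) (by omega) (good_R hg) hRne
      have haR : a ≤ maxL (R (a :: b :: rest)) := mem_le_maxL (mem_R' (Or.inl rfl))
      have hmR : maxL (a :: b :: rest) - a ≤ maxL (R (a :: b :: rest)) :=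
        mem_le_maxL (mem_R' (Or.inr ⟨_, maxL_mem_tail hg, rfl⟩))
      rw [f_cons hg]
      have := maxL_cons_lt hg
      constructor
      · omega
      · intro _
        show 2 * a ≤ _
        omega

theorem f_bounds (p : List ℕ) (hp : OFS p) :
    maxL p ≤ f p ∧ (1 < p.length → 2 * p.headI ≤ f p) := by
  obtain ⟨hne, hs, hpos⟩ := hp
  exact main_aux (maxL p) p le_rfl ⟨hs, hpos⟩ hne
end

section
/- Let p ∈ OFS be trim with |p| = 2. Then fw(p) = p_1 + p_2 − gcd(p_1, p_2). (Fine–Wilf bound for two periods.) -/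
lemma R_pair (x y : ℕ) : R [x, y] =
    if x = y - x then [y - x] else if x ≤ y - x then [x, y - x] else [y - x, x] := by
  have hins : ([y - x].insert x : List ℕ) = if x = y - x then [y - x] else [x, y - x] := by
    by_cases h : x = y - x
    · rw [if_pos h, List.insert_of_mem (List.mem_singleton.mpr h)]
    · rw [if_neg h, List.insert_of_not_mem (fun hm => h (List.mem_singleton.mp hm))]
  show ([y - x].insert x).mergeSort (· ≤ ·) = _
  rw [hins]
  by_cases h : x = y - x
  · rw [if_pos h, if_pos h]
    simp [List.mergeSort]
  · rw [if_neg h, if_neg h]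
    simp [List.mergeSort, List.merge]

lemma faux_pair : ∀ fuel x y, 0 < x → x < y → y ≤ fuel + 1 →
    faux (fuel + 1) [x, y] = x + y - Nat.gcd x y := by
  intro fuel
  induction fuel with
  | zero => intro x y hx hxy hy; omega
  | succ n ih =>
    intro x y hx hxy hy
    have hg : Nat.gcd x (y - x) = Nat.gcd x y := by
      rw [Nat.gcd_comm x (y - x), Nat.gcd_sub_self_left (le_of_lt hxy), Nat.gcd_comm]
    have hgle : Nat.gcd x y ≤ x := Nat.le_of_dvd hx (Nat.gcd_dvd_left x y)
    show x + faux (n + 1) (R [x, y]) = x + y - Nat.gcd x y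
    rw [R_pair]
    split
    · next h =>
      have : faux (n+1) [y-x] = y - x := rfl
      rw [this]
      have : Nat.gcd x y = x := by rw [← hg, ← h, Nat.gcd_self]
      omega
    · next h =>
      split
      · next h2 =>
        rw [ih x (y - x) hx (by omega) (by omega), hg]
        omega
      · next h2 =>
        rw [ih (y - x) x (by omega) (by omega) (by omega), Nat.gcd_comm, hg]
        omega

theorem fine_wilf (p : List ℕ) (hp : OFS p) (ht : Trim p) (hl : p.length = 2) :
    fw p + Nat.gcd p.headI p.tail.headI = p.headI + p.tail.headI := by
  rcases p with _ | ⟨a, _ | ⟨b, _ | ⟨c, t⟩⟩⟩ <;> simp at hl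
  obtain ⟨-, hs, hpos⟩ := hp
  have hab : a < b := by
    have := List.pairwise_cons.mp hs
    exact this.1 b (by simp)
  have ha : 0 < a := hpos a (by simp)
  have hgab : gcdL [a, b] = Nat.gcd a b := by simp [gcdL]
  have hga : gcdL [a] = a := by simp [gcdL]
  have hmax : maxL [a, b] = b := by simp [maxL]; omega
  have hfa : f [a] = a := rfl
  have hne : Nat.gcd a b ≠ a := by
    rcases ht with h | ⟨-, h | ⟨-, h⟩⟩
    · simp at h
    · simp only [List.dropLast, hgab, hga] at h
      exact h
    · simp only [List.dropLast, hfa, hmax] at h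
      omega
  have hfw : fw [a, b] = f [a, b] := by
    rw [fw, dif_neg]
    rintro ⟨-, h2, -⟩
    simp only [List.dropLast, hgab, hga] at h2
    exact hne h2.symm
  have hgle : Nat.gcd a b ≤ a := Nat.le_of_dvd ha (Nat.gcd_dvd_left a b)
  have : f [a, b] = a + b - Nat.gcd a b := by
    rw [f, hmax, faux_pair b a b ha hab (by omega)]
  simp only [List.headI, List.tail]
  rw [hfw, this]
  omega
end

section
/- Let p ∈ OFS with |p| > 1, let k ≥ 1, and define α: V(G(R(p),k)) → V(G(p, p_1 + k)) by α(i) = p_1 + i. If i and j belong to the same connected component of G(R(p), k), then α(i) and α(j) belong to the same connected component of G(p, p_1 + k). -/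
theorem alpha_property (p : List ℕ) (hp : OFS p) (hl : 1 < p.length)
    (k : ℕ) (hk : 1 ≤ k) (i j : Fin k) (h : (G (R p) k).Reachable i j) :
    (G p (p.headI + k)).Reachable
      ⟨p.headI + (i : ℕ), by have := i.isLt; omega⟩
      ⟨p.headI + (j : ℕ), by have := j.isLt; omega⟩ := by
  rcases p with _ | ⟨a, _ | ⟨b, rest⟩⟩
  · simp at hl
  · simp at hl
  · -- p = a :: b :: rest
    have ha : 0 < a := hp.2.2 a (List.mem_cons_self)
    have hlt : ∀ x ∈ b :: rest, a < x := by
      have := hp.2.1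
      rw [List.pairwise_cons] at this
      exact this.1
    have hmemR : ∀ d, d ∈ R (a :: b :: rest) ↔ d = a ∨ ∃ x ∈ b :: rest, x - a = d := by
      intro d
      simp [R, List.mem_mergeSort, List.mem_insert_iff, List.mem_map]
      tauto
    set q := a :: b :: rest with hq
    have hhead : q.headI = a := rfl
    rw [hhead] at *
    -- key step lemma
    have key : ∀ u v : Fin k, ((v : ℕ) - (u : ℕ)) ∈ R q →
        (G q (a + k)).Reachable
          ⟨a + (u : ℕ), by have := u.isLt; omega⟩
          ⟨a + (v : ℕ), by have := v.isLt; omega⟩ := by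
      intro u v hd
      rw [hmemR] at hd
      rcases hd with hd | ⟨x, hx, hxd⟩
      · -- difference is a : direct edge
        apply SimpleGraph.Adj.reachable
        refine ⟨?_, Or.inl ?_⟩
        · intro hcon
          have : a + (u : ℕ) = a + (v : ℕ) := congrArg Fin.val hcon
          omega
        · show (a + (v : ℕ)) - (a + (u : ℕ)) ∈ q
          have : (a + (v : ℕ)) - (a + (u : ℕ)) = a := by omega
          rw [this]; exact List.mem_cons_self
      · -- difference is x - a : two-step path through vertex u
        have hax : a < x := hlt x hx
        have hxq : x ∈ q := List.mem_cons_of_mem _ hx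
        have hd0 : 0 < (v : ℕ) - (u : ℕ) := by omega
        have huv : (v : ℕ) + a = (u : ℕ) + x := by omega
        have hu : (u : ℕ) < a + k := by have := u.isLt; omega
        refine SimpleGraph.Reachable.trans
          (SimpleGraph.Adj.reachable (v := ⟨(u : ℕ), hu⟩) ?_)
          (SimpleGraph.Adj.reachable ?_)
        · refine ⟨?_, Or.inr ?_⟩
          · intro hcon
            have : a + (u : ℕ) = (u : ℕ) := congrArg Fin.val hcon
            omega
          · show (a + (u : ℕ)) - (u : ℕ) ∈ q
            have : (a + (u : ℕ)) - (u : ℕ) = a := by omega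
            rw [this]; exact List.mem_cons_self
        · refine ⟨?_, Or.inl ?_⟩
          · intro hcon
            have : (u : ℕ) = a + (v : ℕ) := congrArg Fin.val hcon
            omega
          · show (a + (v : ℕ)) - (u : ℕ) ∈ q
            have : (a + (v : ℕ)) - (u : ℕ) = x := by omega
            rw [this]; exact hxq
    -- lift along the walk
    obtain ⟨w⟩ := h
    induction w with
    | nil => exact SimpleGraph.Reachable.refl _
    | @cons u v t hadj w ih =>
      refine SimpleGraph.Reachable.trans ?_ ih
      rcases hadj.2 with hd | hd
      · exact key u v hd
      · exact (key v u hd).symm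
end
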